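/- arXiv:2206.12135 — 2 statements merged into one kernel-verified Lean document; each statement's English description precedes it below -/
import Mathlib

section
/- Let p be a prime and let f_{M_p}(n) denote the number of full iterated p-matching sequences over the vertex set [n] = {1,…,n}. Then f_{M_p}(n) = 0 for every n that is not a power of p, and f_{M_p}(n) ≡ 1 (mod p) whenever n = p^m for some m ∈ ℕ. -/
/-!
Write `U_i = E_1 ∪ ⋯ ∪ E_i`. The conditions on `E_{i+1}` make every component of `U_{i+1}` the
union of one component of `U_i` and the `p - 1` components met by its `E_{i+1}`-neighbours, so
the components of `U_i` have `p^i` vertices; fullness makes `U_ℓ` connected, whence `n = p^ℓ`.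

For `n = p^m`, label the vertices by the cyclic group `ℤ/p^m`. Its translations permute the full
sequences, so by the fixed-point congruence for `p`-groups the count is `≡` mod `p` to the number
of translation-invariant ones. In an invariant sequence the component of `0` in `U_i` is a
subgroup of order `p^i`, i.e. `{x | p^i x = 0}`; the components of the `U_i`, and with them the
`E_i`, are thus forced, and the only invariant sequence is the canonical one, in which `E_{i+1}`
joins `u` and `v` iff `p^{i+1}(v - u) = 0 ≠ p^i(v - u)`.
-/

/-- The union E₁ ⊔ ⋯ ⊔ Eᵢ of the first `i` graphs of the list `E`. -/
def unionUpTo {V : Type} (E : List (SimpleGraph V)) (i : ℕ) : SimpleGraph V :=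
  (E.take i).foldr (· ⊔ ·) ⊥

/-- `E = E₁,…,E_ℓ` is an iterated p-matching sequence: for each `i`, writing `U` for
`E₁ ∪ ⋯ ∪ E_{i-1}`, the connected components of `Eᵢ` are vertex-disjoint complete
p-partite graphs whose `p` vertex classes are `p` connected components of `U`, and
every connected component of `U` is a vertex class of some such p-partite graph.
Concretely: edges of `Eᵢ` join distinct components of `U`; adjacency in `Eᵢ` only
depends on the `U`-components of the endpoints; neighbours (in `Eᵢ`) of a common
vertex lying in distinct `U`-components are adjacent; and every vertex has, in `Eᵢ`,
neighbours in exactly `p − 1` distinct `U`-components. -/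
def IsIteratedPMatchingSeq {V : Type} (p : ℕ) (E : List (SimpleGraph V)) : Prop :=
  ∀ i, i < E.length →
    ((∀ u v, (E.getD i ⊥).Adj u v →
        (unionUpTo E i).connectedComponentMk u ≠ (unionUpTo E i).connectedComponentMk v) ∧
     (∀ u v u' v', (E.getD i ⊥).Adj u v →
        (unionUpTo E i).connectedComponentMk u' = (unionUpTo E i).connectedComponentMk u →
        (unionUpTo E i).connectedComponentMk v' = (unionUpTo E i).connectedComponentMk v →
        (E.getD i ⊥).Adj u' v') ∧
     (∀ u v w, (E.getD i ⊥).Adj u v → (E.getD i ⊥).Adj u w →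
        (unionUpTo E i).connectedComponentMk v ≠ (unionUpTo E i).connectedComponentMk w →
        (E.getD i ⊥).Adj v w) ∧
     (∀ u, Nat.card { c : (unionUpTo E i).ConnectedComponent //
        ∃ v, (E.getD i ⊥).Adj u v ∧ (unionUpTo E i).connectedComponentMk v = c } = p - 1))

/-- A sequence of graphs is full if every pair of distinct vertices is an edge of one
of its members. -/
def IsFullSeq {V : Type} (E : List (SimpleGraph V)) : Prop :=
  ∀ u v : V, u ≠ v → ∃ i, i < E.length ∧ (E.getD i ⊥).Adj u v

/-- `f_{M_p}(n)`: the number of full iterated p-matching sequences over [n]. -/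
noncomputable def fMp (p n : ℕ) : ℕ :=
  Nat.card { E : List (SimpleGraph (Fin n)) // IsIteratedPMatchingSeq p E ∧ IsFullSeq E }

lemma List.foldr_sup_append_singleton {α : Type*} [SemilatticeSup α] [OrderBot α] (l : List α)
    (a : α) : (l ++ [a]).foldr (· ⊔ ·) ⊥ = l.foldr (· ⊔ ·) ⊥ ⊔ a := by
  induction l with
  | nil => simp
  | cons b l ih => simp [ih, sup_assoc]

variable {V : Type}

lemma unionUpTo_succ (E : List (SimpleGraph V)) (i : ℕ) :
    unionUpTo E (i + 1) = unionUpTo E i ⊔ E.getD i ⊥ := by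
  rcases lt_or_ge i E.length with hi | hi
  · rw [unionUpTo, unionUpTo, List.take_add_one, List.getElem?_eq_getElem hi, Option.toList_some,
      List.foldr_sup_append_singleton, List.getD_eq_getElem _ _ hi]
  · rw [unionUpTo, unionUpTo, List.take_of_length_le hi, List.take_of_length_le (by omega),
      List.getD_eq_default _ _ hi, sup_bot_eq]

lemma getD_le_unionUpTo (E : List (SimpleGraph V)) {i j : ℕ} (h : j < i) :
    E.getD j ⊥ ≤ unionUpTo E i := by
  induction i with
  | zero => omega
  | succ i ih =>
    rw [unionUpTo_succ]
    rcases Nat.lt_succ_iff_lt_or_eq.mp h with h | rfl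
    · exact (ih h).trans le_sup_left
    · exact le_sup_right

open SimpleGraph

structure IsPartiteLayer (U A : SimpleGraph V) : Prop where
  connectedComponentMk_ne ⦃u v : V⦄ :
    A.Adj u v → U.connectedComponentMk u ≠ U.connectedComponentMk v
  adj_of_connectedComponentMk_eq ⦃u v u' v' : V⦄ : A.Adj u v →
    U.connectedComponentMk u' = U.connectedComponentMk u →
    U.connectedComponentMk v' = U.connectedComponentMk v → A.Adj u' v'
  adj_of_adj_of_adj ⦃u v w : V⦄ : A.Adj u v → A.Adj u w →
    U.connectedComponentMk v ≠ U.connectedComponentMk w → A.Adj v w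

def neighborComponents (U A : SimpleGraph V) (u : V) : Set U.ConnectedComponent :=
  {c | ∃ v, A.Adj u v ∧ U.connectedComponentMk v = c}

lemma isIteratedPMatchingSeq_iff {p : ℕ} {E : List (SimpleGraph V)} :
    IsIteratedPMatchingSeq p E ↔ ∀ i < E.length,
      IsPartiteLayer (unionUpTo E i) (E.getD i ⊥) ∧
        ∀ u, Nat.card (neighborComponents (unionUpTo E i) (E.getD i ⊥) u) = p - 1 :=
  forall₂_congr fun _ _ =>
    ⟨fun ⟨h₁, h₂, h₃, h₄⟩ => ⟨⟨h₁, h₂, h₃⟩, h₄⟩, fun ⟨⟨h₁, h₂, h₃⟩, h₄⟩ => ⟨h₁, h₂, h₃, h₄⟩⟩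

namespace IsPartiteLayer

variable {U A : SimpleGraph V} (h : IsPartiteLayer U A)
include h

-- A walk in `U ⊔ A` can be rerouted to use at most one `A`-edge, at its start.
lemma reachable_sup_iff {u v : V} :
    (U ⊔ A).Reachable u v ↔ U.Reachable u v ∨ ∃ w, A.Adj u w ∧ U.Reachable w v := by
  refine ⟨fun huv => ?_, ?_⟩
  · rw [reachable_iff_reflTransGen] at huv
    induction huv using Relation.ReflTransGen.head_induction_on with
    | refl => exact Or.inl .rfl
    | @head a b hab _ ih =>
      rcases hab with hU | hA
      · rcases ih with hbv | ⟨w, hbw, hwv⟩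
        · exact Or.inl (hU.reachable.trans hbv)
        · exact Or.inr ⟨w, h.adj_of_connectedComponentMk_eq hbw
            (ConnectedComponent.eq.mpr hU.reachable) rfl, hwv⟩
      · rcases ih with hbv | ⟨w, hbw, hwv⟩
        · exact Or.inr ⟨b, hA, hbv⟩
        · by_cases haw : U.connectedComponentMk a = U.connectedComponentMk w
          · exact Or.inl ((ConnectedComponent.eq.mp haw).trans hwv)
          · exact Or.inr ⟨w, h.adj_of_adj_of_adj hA.symm hbw haw, hwv⟩
  · rintro (huv | ⟨w, huw, hwv⟩)
    · exact huv.mono le_sup_left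
    · exact (huw.reachable.mono le_sup_right).trans (hwv.mono le_sup_left)

lemma adj_iff {u v : V} : A.Adj u v ↔ (U ⊔ A).Reachable u v ∧ ¬U.Reachable u v := by
  refine ⟨fun huv => ⟨huv.reachable.mono le_sup_right,
    fun hr => h.connectedComponentMk_ne huv (ConnectedComponent.eq.mpr hr)⟩, ?_⟩
  rintro ⟨huv, hnot⟩
  obtain huv | ⟨w, huw, hwv⟩ := h.reachable_sup_iff.mp huv
  · exact absurd huv hnot
  · exact h.adj_of_connectedComponentMk_eq huw rfl (ConnectedComponent.eq.mpr hwv.symm)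

lemma supp_connectedComponentMk_sup (u : V) :
    ((U ⊔ A).connectedComponentMk u).supp = U.connectedComponentMk ⁻¹'
      insert (U.connectedComponentMk u) (neighborComponents U A u) := by
  ext v
  simp only [ConnectedComponent.mem_supp_iff, ConnectedComponent.eq, Set.mem_preimage,
    Set.mem_insert_iff, neighborComponents, Set.mem_ofPred_eq]
  rw [reachable_comm, h.reachable_sup_iff, reachable_comm]

lemma card_supp_connectedComponentMk_sup [Finite V] {s : ℕ}
    (hs : ∀ c : U.ConnectedComponent, Nat.card c.supp = s) (u : V) :
    Nat.card ((U ⊔ A).connectedComponentMk u).supp =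
      (Nat.card (neighborComponents U A u) + 1) * s := by
  classical
  rw [h.supp_connectedComponentMk_sup]
  set Q := insert (U.connectedComponentMk u) (neighborComponents U A u)
  have hu : U.connectedComponentMk u ∉ neighborComponents U A u :=
    fun ⟨v, huv, hvu⟩ => h.connectedComponentMk_ne huv hvu.symm
  have hfiber : ∀ c, Nat.card {v // U.connectedComponentMk v = c} = s := hs
  have hQ : Nat.card Q = Nat.card (neighborComponents U A u) + 1 := by
    rw [Nat.card_coe_set_eq, Nat.card_coe_set_eq, Set.ncard_insert_of_notMem hu]
  rw [← (Set.toFinite Q).coe_toFinset,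
    Finset.card_preimage_eq_sum_card_image_eq fun _ _ => Set.toFinite _,
    Finset.sum_congr rfl fun c _ => hfiber c, Finset.sum_const, smul_eq_mul,
    ← Set.ncard_eq_toFinset_card, ← Nat.card_coe_set_eq, hQ]

end IsPartiteLayer

lemma IsFullSeq.reachable_unionUpTo_length {E : List (SimpleGraph V)} (hf : IsFullSeq E)
    (u v : V) : (unionUpTo E E.length).Reachable u v := by
  by_cases huv : u = v
  · exact huv ▸ .rfl
  · obtain ⟨i, hi, huv⟩ := hf u v huv
    exact huv.reachable.mono (getD_le_unionUpTo E hi)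

namespace IsIteratedPMatchingSeq

variable {p : ℕ} {E : List (SimpleGraph V)} (h : IsIteratedPMatchingSeq p E)
include h

lemma card_supp_unionUpTo [Finite V] (hp : 0 < p) {i : ℕ} (hi : i ≤ E.length)
    (c : (unionUpTo E i).ConnectedComponent) : Nat.card c.supp = p ^ i := by
  induction c using ConnectedComponent.ind with | _ u =>
  induction i generalizing u with
  | zero =>
    have hsupp : ((unionUpTo E 0).connectedComponentMk u).supp = {u} := by
      ext v
      simp [unionUpTo, ConnectedComponent.eq]
    rw [hsupp, Nat.card_unique, pow_zero]
  | succ i ih =>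
    obtain ⟨hlayer, hcount⟩ := isIteratedPMatchingSeq_iff.mp h i hi
    have := hlayer.card_supp_connectedComponentMk_sup
      (fun c => ConnectedComponent.ind (fun v => ih (by omega) v) c) u
    rw [← unionUpTo_succ, hcount u, Nat.sub_add_cancel hp] at this
    rw [this, pow_succ']

lemma card_eq_pow_length [Finite V] [Nonempty V] (hp : 0 < p) (hf : IsFullSeq E) :
    Nat.card V = p ^ E.length := by
  obtain ⟨u⟩ := ‹Nonempty V›
  have hsupp : ((unionUpTo E E.length).connectedComponentMk u).supp = Set.univ :=
    Set.eq_univ_of_forall fun v => ConnectedComponent.eq.mpr (hf.reachable_unionUpTo_length v u)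
  rw [← h.card_supp_unionUpTo hp le_rfl, hsupp, Nat.card_univ]

end IsIteratedPMatchingSeq

lemma eq_of_reachable_unionUpTo_iff {p q : ℕ} {E F : List (SimpleGraph V)}
    (hE : IsIteratedPMatchingSeq p E) (hF : IsIteratedPMatchingSeq q F)
    (hlen : E.length = F.length)
    (hreach : ∀ i ≤ E.length, ∀ u v,
      (unionUpTo E i).Reachable u v ↔ (unionUpTo F i).Reachable u v) : E = F := by
  refine List.ext_getElem hlen fun i hiE hiF => ?_
  have hlayerE := (isIteratedPMatchingSeq_iff.mp hE i hiE).1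
  have hlayerF := (isIteratedPMatchingSeq_iff.mp hF i hiF).1
  ext u v
  rw [← List.getD_eq_getElem _ ⊥ hiE, ← List.getD_eq_getElem _ ⊥ hiF, hlayerE.adj_iff,
    hlayerF.adj_iff, ← unionUpTo_succ, ← unionUpTo_succ, hreach i hiE.le, hreach (i + 1) hiE]

abbrev FullIteratedSeq (p : ℕ) (V : Type) :=
  { E : List (SimpleGraph V) // IsIteratedPMatchingSeq p E ∧ IsFullSeq E }

lemma fMp_eq_zero_of_not_pow {p n : ℕ} (hp : 0 < p) (hn : ¬∃ m, n = p ^ m) : fMp p n = 0 := by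
  rcases n.eq_zero_or_pos with rfl | hn0
  · -- Over the empty vertex set every list of graphs qualifies, so `Nat.card` takes its junk value.
    have : Infinite (FullIteratedSeq p (Fin 0)) :=
      Infinite.of_injective
        (fun k => ⟨List.replicate k ⊥, fun _ _ => ⟨finZeroElim, finZeroElim, finZeroElim,
          finZeroElim⟩, finZeroElim⟩)
        (fun k l hkl => by simpa using congrArg (fun E => E.1.length) hkl)
    exact Nat.card_eq_zero_of_infinite
  · have : NeZero n := ⟨hn0.ne'⟩
    have : IsEmpty (FullIteratedSeq p (Fin n)) :=
      ⟨fun ⟨E, hE, hf⟩ => hn ⟨E.length, by simpa using hE.card_eq_pow_length hp hf⟩⟩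
    exact Nat.card_of_isEmpty

section Action

variable {H : Type*} [Group H]

instance List.instMulActionMap {α : Type*} [MulAction H α] : MulAction H (List α) where
  smul g l := l.map (g • ·)
  one_smul l := by
    change l.map ((1 : H) • ·) = l
    simp
  mul_smul g g' l := by
    change l.map ((g * g') • ·) = (l.map (g' • ·)).map (g • ·)
    simp [Function.comp_def, mul_smul]

lemma List.smul_def {α : Type*} [MulAction H α] (g : H) (l : List α) :
    g • l = l.map (g • ·) := rfl

variable [MulAction H V]

namespace SimpleGraph

instance : MulAction H (SimpleGraph V) where
  smul g G :=
    { Adj a b := G.Adj (g⁻¹ • a) (g⁻¹ • b)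
      symm := ⟨fun _ _ h => h.symm⟩
      loopless := ⟨fun _ h => G.loopless.irrefl _ h⟩ }
  one_smul G := by
    ext a b
    change G.Adj ((1 : H)⁻¹ • a) ((1 : H)⁻¹ • b) ↔ _
    simp
  mul_smul g g' G := by
    ext a b
    change G.Adj ((g * g')⁻¹ • a) ((g * g')⁻¹ • b) ↔ G.Adj (g'⁻¹ • g⁻¹ • a) (g'⁻¹ • g⁻¹ • b)
    simp [mul_smul]

lemma smul_adj (g : H) (G : SimpleGraph V) (a b : V) :
    (g • G).Adj a b ↔ G.Adj (g⁻¹ • a) (g⁻¹ • b) := Iff.rfl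

lemma smul_bot (g : H) : g • (⊥ : SimpleGraph V) = ⊥ := by
  ext; simp [smul_adj]

lemma smul_sup (g : H) (G G' : SimpleGraph V) : g • (G ⊔ G') = g • G ⊔ g • G' := by
  ext; simp [smul_adj]

def smulIso (g : H) (G : SimpleGraph V) : G ≃g g • G :=
  ⟨MulAction.toPerm g, by simp [smul_adj]⟩

lemma reachable_smul_iff {g : H} {G : SimpleGraph V} {a b : V} :
    (g • G).Reachable a b ↔ G.Reachable (g⁻¹ • a) (g⁻¹ • b) := by
  simpa [smulIso] using (smulIso g G).reachable_iff (u := g⁻¹ • a) (v := g⁻¹ • b)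

lemma connectedComponentMk_smul_eq_iff {g : H} {G : SimpleGraph V} {a b : V} :
    (g • G).connectedComponentMk a = (g • G).connectedComponentMk b ↔
      G.connectedComponentMk (g⁻¹ • a) = G.connectedComponentMk (g⁻¹ • b) := by
  simp only [ConnectedComponent.eq, reachable_smul_iff]

end SimpleGraph

lemma IsPartiteLayer.smul {U A : SimpleGraph V} (h : IsPartiteLayer U A) (g : H) :
    IsPartiteLayer (g • U) (g • A) where
  connectedComponentMk_ne _ _ huv := by
    rw [Ne, connectedComponentMk_smul_eq_iff]
    exact h.connectedComponentMk_ne huv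
  adj_of_connectedComponentMk_eq _ _ _ _ huv hu hv := by
    rw [connectedComponentMk_smul_eq_iff] at hu hv
    exact h.adj_of_connectedComponentMk_eq huv hu hv
  adj_of_adj_of_adj _ _ _ huv huw hvw := by
    rw [Ne, connectedComponentMk_smul_eq_iff] at hvw
    exact h.adj_of_adj_of_adj huv huw hvw

lemma card_neighborComponents_smul (g : H) (U A : SimpleGraph V) (u : V) :
    Nat.card (neighborComponents (g • U) (g • A) u) =
      Nat.card (neighborComponents U A (g⁻¹ • u)) := by
  refine Nat.card_congr (Equiv.subtypeEquiv (smulIso g U).symm.connectedComponentEquiv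
    fun c => ?_)
  induction c using ConnectedComponent.ind with | _ w =>
  simp only [neighborComponents, Set.mem_ofPred_eq, Iso.connectedComponentEquiv,
    Equiv.coe_fn_mk, ConnectedComponent.map_mk, smul_adj, connectedComponentMk_smul_eq_iff]
  constructor
  · rintro ⟨v, huv, hvw⟩
    exact ⟨g⁻¹ • v, huv, hvw⟩
  · rintro ⟨v, huv, hvw⟩
    exact ⟨g • v, by rwa [inv_smul_smul], by rw [inv_smul_smul]; exact hvw⟩

lemma getD_smul (g : H) (E : List (SimpleGraph V)) (i : ℕ) :
    (g • E).getD i ⊥ = g • E.getD i ⊥ := by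
  rw [List.smul_def, ← smul_bot g, List.getD_map, smul_bot]

lemma unionUpTo_smul (g : H) (E : List (SimpleGraph V)) (i : ℕ) :
    unionUpTo (g • E) i = g • unionUpTo E i := by
  induction i with
  | zero => exact (smul_bot g).symm
  | succ i ih => rw [unionUpTo_succ, unionUpTo_succ, ih, getD_smul, smul_sup]

lemma IsIteratedPMatchingSeq.smul {p : ℕ} {E : List (SimpleGraph V)}
    (h : IsIteratedPMatchingSeq p E) (g : H) : IsIteratedPMatchingSeq p (g • E) := by
  rw [isIteratedPMatchingSeq_iff] at h ⊢
  intro i hi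
  rw [List.smul_def, List.length_map] at hi
  obtain ⟨hlayer, hcount⟩ := h i hi
  rw [unionUpTo_smul, getD_smul]
  exact ⟨hlayer.smul g, fun u => (card_neighborComponents_smul g _ _ u).trans (hcount _)⟩

lemma IsFullSeq.smul {E : List (SimpleGraph V)} (h : IsFullSeq E) (g : H) :
    IsFullSeq (g • E) := by
  intro u v huv
  obtain ⟨i, hi, hadj⟩ := h (g⁻¹ • u) (g⁻¹ • v) (by simpa using huv)
  exact ⟨i, by simpa [List.smul_def] using hi, by rw [getD_smul]; exact hadj⟩

instance {p : ℕ} : MulAction H (FullIteratedSeq p V) where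
  smul g E := ⟨g • E.1, E.2.1.smul g, E.2.2.smul g⟩
  one_smul E := Subtype.ext (one_smul H E.1)
  mul_smul g g' E := Subtype.ext (mul_smul g g' E.1)

end Action

open Fin.CommRing in
instance (n : ℕ) [NeZero n] : IsAddCyclic (Fin n) :=
  ⟨⟨1, fun x => ⟨x.val, by simp only [natCast_zsmul, nsmul_one, Fin.cast_val_eq_self]⟩⟩⟩

namespace IsAddCyclic

variable {G : Type*} [AddCommGroup G] [IsAddCyclic G] [Finite G]

lemma natCard_nsmul_eq_zero_le {k : ℕ} (hk : 0 < k) : Nat.card {x : G | k • x = 0} ≤ k := by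
  classical
  have := Fintype.ofFinite G
  simpa [Nat.card_eq_card_toFinset, Set.toFinset_ofPred] using card_nsmul_eq_zero_le (α := G) hk

lemma natCard_nsmul_eq_zero {a : ℕ} (ha : a ∣ Nat.card G) :
    Nat.card {x : G | a • x = 0} = a := by
  obtain ⟨b, hG⟩ := ha
  have ha : 0 < a := Nat.pos_of_mul_pos_right (hG ▸ Nat.card_pos)
  have hb : 0 < b := Nat.pos_of_mul_pos_left (hG ▸ Nat.card_pos)
  set f := DistribSMul.toAddMonoidHom G a
  have hker : Nat.card f.ker ≤ a := natCard_nsmul_eq_zero_le ha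
  have hrange : Nat.card f.range ≤ b := by
    refine le_trans (Nat.card_mono (Set.toFinite _) ?_) (natCard_nsmul_eq_zero_le hb)
    rintro _ ⟨x, rfl⟩
    change b • a • x = 0
    rw [smul_smul, mul_comm, ← hG, card_nsmul_eq_zero']
  have hmul : Nat.card f.ker * Nat.card f.range = a * b := by
    rw [← AddSubgroup.index_ker, AddSubgroup.card_mul_index, hG]
  change Nat.card f.ker = a
  exact le_antisymm hker (le_of_not_gt fun h => by nlinarith)

lemma mem_addSubgroup_iff_card_nsmul_eq_zero (S : AddSubgroup G) (x : G) :
    x ∈ S ↔ Nat.card S • x = 0 := by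
  have hsub : (S : Set G) ⊆ {x | Nat.card S • x = 0} := fun x hx =>
    addOrderOf_dvd_iff_nsmul_eq_zero.mp (S.addOrderOf_dvd_natCard hx)
  have hcard : Nat.card {x : G | Nat.card S • x = 0} = Nat.card S :=
    natCard_nsmul_eq_zero S.card_addSubgroup_dvd_card
  have := Set.eq_of_subset_of_ncard_le hsub (by
    rw [← Nat.card_coe_set_eq, ← Nat.card_coe_set_eq, hcard]; rfl)
  exact Set.ext_iff.mp this x

end IsAddCyclic

section Canonical

variable {G : Type} [AddCommGroup G] {p : ℕ}

-- For `G` cyclic of order `p^m`: `u` and `v` lie in the same coset of the subgroup of order `p^i`.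
def IsSameBlock (p i : ℕ) (u v : G) : Prop := p ^ i • (v - u) = 0

namespace IsSameBlock

lemma refl (i : ℕ) (u : G) : IsSameBlock p i u u := by simp [IsSameBlock]

lemma symm {i : ℕ} {u v : G} (h : IsSameBlock p i u v) : IsSameBlock p i v u := by
  rwa [IsSameBlock, ← neg_sub, smul_neg, neg_eq_zero]

lemma trans {i : ℕ} {u v w : G} (huv : IsSameBlock p i u v) (hvw : IsSameBlock p i v w) :
    IsSameBlock p i u w := by
  rw [IsSameBlock, ← sub_add_sub_cancel w v u, smul_add, hvw, huv, add_zero]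

lemma succ {i : ℕ} {u v : G} (h : IsSameBlock p i u v) : IsSameBlock p (i + 1) u v := by
  rw [IsSameBlock, pow_succ', mul_smul, h, smul_zero]

lemma zero_iff {u v : G} : IsSameBlock p 0 u v ↔ u = v := by
  rw [IsSameBlock, pow_zero, one_smul, sub_eq_zero, eq_comm]

end IsSameBlock

variable (p) in
def canonicalGraph (i : ℕ) : SimpleGraph G where
  Adj u v := IsSameBlock p (i + 1) u v ∧ ¬IsSameBlock p i u v
  symm := ⟨fun _ _ ⟨h₁, h₂⟩ => ⟨h₁.symm, fun h => h₂ h.symm⟩⟩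
  loopless := ⟨fun u ⟨_, h⟩ => h (.refl i u)⟩

variable (G p) in
def canonicalSeq (m : ℕ) : List (SimpleGraph G) := (List.range m).map (canonicalGraph p)

variable {m : ℕ}

lemma length_canonicalSeq : (canonicalSeq G p m).length = m := by simp [canonicalSeq]

lemma getD_canonicalSeq {i : ℕ} (hi : i < m) :
    (canonicalSeq G p m).getD i ⊥ = canonicalGraph p i := by
  simp [canonicalSeq, hi]

lemma unionUpTo_canonicalSeq_adj {i : ℕ} (hi : i ≤ m) {u v : G} :
    (unionUpTo (canonicalSeq G p m) i).Adj u v ↔ u ≠ v ∧ IsSameBlock p i u v := by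
  induction i with
  | zero => simp [unionUpTo, IsSameBlock.zero_iff]
  | succ i ih =>
    rw [unionUpTo_succ, sup_adj, ih (by omega), getD_canonicalSeq (by omega), canonicalGraph]
    by_cases hi : IsSameBlock p i u v
    · simp [hi, hi.succ]
    · simp only [hi, and_false, false_or, not_false_eq_true, and_true, iff_and_self]
      rintro _ rfl
      exact hi (.refl i u)

lemma reachable_unionUpTo_canonicalSeq_iff {i : ℕ} (hi : i ≤ m) {u v : G} :
    (unionUpTo (canonicalSeq G p m) i).Reachable u v ↔ IsSameBlock p i u v := by
  refine ⟨fun huv => ?_, fun huv => ?_⟩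
  · rw [reachable_iff_reflTransGen] at huv
    induction huv with
    | refl => exact .refl i u
    | tail _ hadj ih => exact ih.trans ((unionUpTo_canonicalSeq_adj hi).mp hadj).2
  · by_cases h : u = v
    · exact h ▸ .rfl
    · exact ((unionUpTo_canonicalSeq_adj hi).mpr ⟨h, huv⟩).reachable

lemma isFullSeq_canonicalSeq [Finite G] (hG : Nat.card G = p ^ m) :
    IsFullSeq (canonicalSeq G p m) := by
  classical
  intro u v huv
  have hm : IsSameBlock p m u v := by rw [IsSameBlock, ← hG, card_nsmul_eq_zero']
  have hex : ∃ k, IsSameBlock p k u v := ⟨m, hm⟩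
  obtain ⟨i, hi⟩ : ∃ i, Nat.find hex = i + 1 := Nat.exists_eq_succ_of_ne_zero fun h =>
    huv (IsSameBlock.zero_iff.mp (h ▸ Nat.find_spec hex))
  have him : i < m := by
    have := Nat.find_min' hex hm
    omega
  refine ⟨i, by rwa [length_canonicalSeq], ?_⟩
  rw [getD_canonicalSeq him]
  exact ⟨hi ▸ Nat.find_spec hex, Nat.find_min hex (by omega)⟩

lemma smul_canonicalSeq (c : Multiplicative G) : c • canonicalSeq G p m = canonicalSeq G p m := by
  rw [List.smul_def, canonicalSeq, List.map_map]
  congr 1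
  funext i
  ext a b
  obtain ⟨c, rfl⟩ := Multiplicative.ofAdd.surjective c
  simp [smul_adj, canonicalGraph, IsSameBlock, ← ofAdd_neg]

variable [IsAddCyclic G] [Finite G]

lemma card_supp_unionUpTo_canonicalSeq (hG : Nat.card G = p ^ m) {i : ℕ} (hi : i ≤ m)
    (c : (unionUpTo (canonicalSeq G p m) i).ConnectedComponent) : Nat.card c.supp = p ^ i := by
  induction c using ConnectedComponent.ind with | _ u =>
  refine (Nat.card_congr (Equiv.subtypeEquiv (Equiv.subRight u) fun v => ?_)).trans
    (IsAddCyclic.natCard_nsmul_eq_zero (hG ▸ pow_dvd_pow p hi))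
  rw [ConnectedComponent.mem_supp_iff, ConnectedComponent.eq, reachable_comm,
    reachable_unionUpTo_canonicalSeq_iff hi]
  rfl

lemma isIteratedPMatchingSeq_canonicalSeq (hp : 0 < p) (hG : Nat.card G = p ^ m) :
    IsIteratedPMatchingSeq p (canonicalSeq G p m) := by
  rw [isIteratedPMatchingSeq_iff]
  intro i hi
  rw [length_canonicalSeq] at hi
  set U := unionUpTo (canonicalSeq G p m) i
  have hmk : ∀ u v : G, U.connectedComponentMk u = U.connectedComponentMk v ↔ IsSameBlock p i u v :=
    fun u v => ConnectedComponent.eq.trans (reachable_unionUpTo_canonicalSeq_iff hi.le)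
  have hlayer : IsPartiteLayer U (canonicalGraph p i) :=
    { connectedComponentMk_ne := fun u v huv => by
        rw [Ne, hmk]
        exact huv.2
      adj_of_connectedComponentMk_eq := fun u v u' v' huv hu hv => by
        rw [hmk] at hu hv
        exact ⟨(hu.succ.trans huv.1).trans hv.symm.succ,
          fun h => huv.2 ((hu.symm.trans h).trans hv)⟩
      adj_of_adj_of_adj := fun u v w huv huw hvw => by
        rw [Ne, hmk] at hvw
        exact ⟨huv.1.symm.trans huw.1, hvw⟩ }
  have hsucc : unionUpTo (canonicalSeq G p m) (i + 1) = U ⊔ canonicalGraph p i := by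
    rw [unionUpTo_succ, getD_canonicalSeq hi]
  rw [getD_canonicalSeq hi]
  refine ⟨hlayer, fun u => ?_⟩
  have hcard := hlayer.card_supp_connectedComponentMk_sup
    (card_supp_unionUpTo_canonicalSeq hG hi.le) u
  rw [← hsucc, card_supp_unionUpTo_canonicalSeq hG hi, pow_succ'] at hcard
  have := Nat.eq_of_mul_eq_mul_right (pow_pos hp i) hcard
  omega

lemma reachable_unionUpTo_iff_of_forall_smul_eq {E : List (SimpleGraph G)}
    (hE : IsIteratedPMatchingSeq p E) (hp : 0 < p) (hinv : ∀ c : Multiplicative G, c • E = E)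
    {i : ℕ} (hi : i ≤ E.length) {u v : G} :
    (unionUpTo E i).Reachable u v ↔ IsSameBlock p i u v := by
  set U := unionUpTo E i
  have htrans : ∀ c x y : G, U.Reachable (c + x) (c + y) ↔ U.Reachable x y := fun c x y => by
    have := reachable_smul_iff (g := Multiplicative.ofAdd c) (G := U) (a := c + x) (b := c + y)
    rwa [← unionUpTo_smul, hinv, ← ofAdd_neg, ofAdd_smul, ofAdd_smul, vadd_eq_add, vadd_eq_add,
      neg_add_cancel_left, neg_add_cancel_left] at this
  let S : AddSubgroup G :=
    { carrier := {x | U.Reachable 0 x}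
      add_mem' := fun {x y} hx hy => hx.trans (by simpa using (htrans x 0 y).mpr hy)
      zero_mem' := .rfl
      neg_mem' := fun {x} hx => by simpa using ((htrans (-x) 0 x).mpr hx).symm }
  have hS : Nat.card S = p ^ i := by
    have hsupp : (S : Set G) = (U.connectedComponentMk 0).supp := by
      ext x
      exact (ConnectedComponent.eq.trans reachable_comm).symm
    rw [← hE.card_supp_unionUpTo hp hi (U.connectedComponentMk 0), ← hsupp]
    rfl
  rw [← htrans (-u), neg_add_cancel, neg_add_eq_sub, IsSameBlock, ← hS]
  exact IsAddCyclic.mem_addSubgroup_iff_card_nsmul_eq_zero S (v - u)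

lemma eq_canonicalSeq_of_forall_smul_eq (hp : 2 ≤ p) (hG : Nat.card G = p ^ m)
    {E : List (SimpleGraph G)} (hE : IsIteratedPMatchingSeq p E) (hf : IsFullSeq E)
    (hinv : ∀ c : Multiplicative G, c • E = E) : E = canonicalSeq G p m := by
  have hlen : E.length = m :=
    Nat.pow_right_injective hp ((hE.card_eq_pow_length (by omega) hf).symm.trans hG)
  refine eq_of_reachable_unionUpTo_iff hE (isIteratedPMatchingSeq_canonicalSeq (by omega) hG)
    (by rw [hlen, length_canonicalSeq]) fun i hi u v => ?_
  rw [reachable_unionUpTo_iff_of_forall_smul_eq hE (by omega) hinv hi,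
    reachable_unionUpTo_canonicalSeq_iff (hlen ▸ hi)]

end Canonical

lemma finite_fullIteratedSeq [Finite V] [Nonempty V] {p : ℕ} (hp : 2 ≤ p) :
    Finite (FullIteratedSeq p V) :=
  Set.Finite.to_subtype <| (List.finite_length_le _ (Nat.card V)).subset fun E ⟨hE, hf⟩ =>
    (hE.card_eq_pow_length (by omega) hf ▸ (Nat.lt_pow_self hp).le :)

theorem card_fullIteratedSeq_modEq_one {G : Type} [AddCommGroup G] [IsAddCyclic G] [Finite G]
    {p m : ℕ} (hp : p.Prime) (hG : Nat.card G = p ^ m) :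
    Nat.card (FullIteratedSeq p G) ≡ 1 [MOD p] := by
  have : Fact p.Prime := ⟨hp⟩
  have := finite_fullIteratedSeq (V := G) hp.two_le
  have hfixed : MulAction.fixedPoints (Multiplicative G) (FullIteratedSeq p G) =
      {⟨canonicalSeq G p m, isIteratedPMatchingSeq_canonicalSeq hp.pos hG,
        isFullSeq_canonicalSeq hG⟩} :=
    Set.eq_singleton_iff_unique_mem.mpr ⟨fun c => Subtype.ext (smul_canonicalSeq c),
      fun E hE => Subtype.ext (eq_canonicalSeq_of_forall_smul_eq hp.two_le hG E.2.1 E.2.2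
        fun c => congrArg Subtype.val (hE c))⟩
  have hpGroup : IsPGroup p (Multiplicative G) := IsPGroup.of_card hG
  simpa [hfixed] using hpGroup.card_modEq_card_fixedPoints (FullIteratedSeq p G)

/-- **Counting full iterated p-matching sequences.**
For a prime p, f_{M_p}(n) = 0 whenever n is not a power of p, and
f_{M_p}(n) ≡ 1 (mod p) whenever n = p^m. -/
theorem fMp_eq_zero_or_one_mod_p (p : ℕ) (hp : p.Prime) :
    (∀ n : ℕ, (¬ ∃ m : ℕ, n = p ^ m) → fMp p n = 0) ∧
    (∀ m : ℕ, fMp p (p ^ m) ≡ 1 [MOD p]) := by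
  refine ⟨fun n hn => fMp_eq_zero_of_not_pow hp.pos hn, fun m => ?_⟩
  have : NeZero (p ^ m) := ⟨pow_ne_zero m hp.ne_zero⟩
  exact card_fullIteratedSeq_modEq_one hp (Nat.card_fin _)
end

section
/- Let p be a prime and let f_{M_p}(n) denote the number of partitions of [n] = {1,…,n} into blocks each of size exactly p. Then for every n > p one has f_{M_p}(n) ≡ f_{M_p}(n − p) (mod p). -/
/-- The number of perfect p-matchings over [n], i.e. partitions of [n] into blocks of
size exactly p. -/
noncomputable def perfectPMatchings (p n : ℕ) : ℕ :=
  Nat.card { P : Finpartition (Finset.univ : Finset (Fin n)) //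
    ∀ b ∈ P.parts, b.card = p }

/-!
Fix a set `s` of `p` points of `[n]` and a `p`-cycle `g` with support `s`. The cyclic group
generated by `g` has order `p` and acts on the perfect `p`-matchings of `[n]`, so their number is
congruent mod `p` to the number of matchings fixed by `g`. A fixed matching must contain `s` as a
block: the block of a point of `s` is mapped by `g` to a block, and if it also contained a point
outside `s` it would be `g`-invariant, hence contain all of `s` and have more than `p` elements.
The matchings containing the block `s` are the perfect `p`-matchings of the remaining `n - p`
points.
-/

open Finset

namespace Finpartition

section Embedding

variable {α β : Type*} [DecidableEq α] [DecidableEq β] {s : Finset α}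

def mapEmbedding (f : α ↪ β) (P : Finpartition s) : Finpartition (s.map f) where
  parts := P.parts.map (Finset.mapEmbedding f).toEmbedding
  supIndep := by
    rw [supIndep_iff_pairwiseDisjoint, coe_map]
    rintro _ ⟨b, hb, rfl⟩ _ ⟨c, hc, rfl⟩ hbc
    exact (disjoint_map f).2 (P.disjoint hb hc (ne_of_apply_ne _ hbc))
  sup_parts := by
    ext y
    conv_rhs => rw [← P.sup_parts]
    simp only [mem_sup, mem_map, RelEmbedding.coe_toEmbedding, mapEmbedding_apply, id]
    aesop
  bot_notMem := by simp

theorem parts_mapEmbedding (f : α ↪ β) (P : Finpartition s) :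
    (P.mapEmbedding f).parts = P.parts.map (Finset.mapEmbedding f).toEmbedding := rfl

noncomputable def comapEmbedding (f : α ↪ β) (Q : Finpartition (s.map f)) : Finpartition s where
  parts := Q.parts.image (·.preimage f f.injective.injOn)
  supIndep := by
    rw [supIndep_iff_pairwiseDisjoint, coe_image]
    rintro _ ⟨b, hb, rfl⟩ _ ⟨c, hc, rfl⟩ hbc
    exact disjoint_preimage (hs := f.injective.injOn) (ht := f.injective.injOn)
      (Q.disjoint hb hc (by rintro rfl; exact hbc rfl))
  sup_parts := by
    ext x
    have hx := congrArg (f x ∈ ·) Q.sup_parts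
    simp only [mem_sup, id, mem_map' f] at hx
    simpa only [mem_sup, mem_image, id, exists_exists_and_eq_and, mem_preimage] using Iff.of_eq hx
  bot_notMem := by
    simp only [bot_eq_empty, mem_image, not_exists, not_and]
    intro b hb hempty
    obtain ⟨y, hy⟩ := Q.nonempty_of_mem_parts hb
    obtain ⟨x, -, rfl⟩ := mem_map.1 (Q.le hb hy)
    exact notMem_empty x (hempty ▸ mem_preimage.2 hy)

noncomputable def mapEmbeddingEquiv (f : α ↪ β) :
    Finpartition s ≃ Finpartition (s.map f) where
  toFun := mapEmbedding f
  invFun := comapEmbedding f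
  left_inv P := by
    ext b
    simp [comapEmbedding, parts_mapEmbedding, preimage_map]
  right_inv Q := by
    have hpart : ∀ b ∈ Q.parts, (b.preimage f f.injective.injOn).map f = b := fun b hb => by
      obtain ⟨u, -, rfl⟩ := subset_map_iff.1 (Q.le hb)
      rw [preimage_map]
    ext b
    simp only [parts_mapEmbedding, comapEmbedding, mem_map, mem_image, RelEmbedding.coe_toEmbedding,
      mapEmbedding_apply, exists_exists_and_eq_and]
    exact ⟨fun ⟨a, ha, hab⟩ => hab ▸ (hpart a ha).symm ▸ ha,
      fun hb => ⟨b, hb, hpart b hb⟩⟩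

end Embedding

theorem parts_avoid_of_mem {α : Type*} [DecidableEq α] {s t : Finset α} {P : Finpartition t}
    (hs : s ∈ P.parts) : (P.avoid s).parts = P.parts.erase s := by
  ext c
  simp only [mem_avoid, mem_erase]
  constructor
  · rintro ⟨d, hd, hds, rfl⟩
    have hdisj : Disjoint d s := P.disjoint hd hs (by rintro rfl; exact hds le_rfl)
    rw [sdiff_eq_self_of_disjoint hdisj]
    exact ⟨by rintro rfl; exact hds le_rfl, hd⟩
  · rintro ⟨hcs, hc⟩
    have hdisj : Disjoint c s := P.disjoint hc hs hcs
    exact ⟨c, hc, fun hle => P.ne_bot hc (hdisj.eq_bot_of_le hle),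
      sdiff_eq_self_of_disjoint hdisj⟩

section PermAction

variable {α : Type*} [Fintype α] [DecidableEq α]

instance : MulAction (Equiv.Perm α) (Finpartition (univ : Finset α)) where
  smul g P := (P.mapEmbedding g.toEmbedding).copy (map_univ_equiv g)
  one_smul P := by
    ext b
    change b ∈ P.parts.map _ ↔ _
    simp [Equiv.Perm.one_def, Equiv.refl_toEmbedding]
  mul_smul g h P := by
    ext b
    change b ∈ P.parts.map _ ↔ b ∈ (P.parts.map _).map _
    simp [map_map, Equiv.Perm.mul_def, Equiv.trans_toEmbedding]

theorem parts_smul (g : Equiv.Perm α) (P : Finpartition (univ : Finset α)) :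
    (g • P).parts = P.parts.map (Finset.mapEmbedding g.toEmbedding).toEmbedding := rfl

theorem smul_eq_self_of_support_mem {g : Equiv.Perm α} {P : Finpartition (univ : Finset α)}
    (hg : g.support ∈ P.parts) : g • P = P := by
  have hfix : ∀ b ∈ P.parts, b.map g.toEmbedding = b := fun b hb => by
    refine map_eq_of_subset fun y hy => ?_
    obtain ⟨x, hx, rfl⟩ := mem_map.1 hy
    by_cases hbg : b = g.support
    · subst hbg
      exact Equiv.Perm.apply_mem_support.2 hx
    · have hxg : x ∉ g.support := disjoint_left.1 (P.disjoint hb hg hbg) hx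
      rwa [Equiv.toEmbedding_apply, Equiv.Perm.notMem_support.1 hxg]
  ext1
  rw [parts_smul]
  refine map_eq_of_subset fun b hb => ?_
  obtain ⟨c, hc, rfl⟩ := mem_map.1 hb
  simpa [hfix c hc] using hc

theorem support_mem_of_smul_eq_self {g : Equiv.Perm α} {P : Finpartition (univ : Finset α)}
    (hg : g.IsCycle) (hP : ∀ b ∈ P.parts, #b = #g.support) (hgP : g • P = P) :
    g.support ∈ P.parts := by
  obtain ⟨x, hx⟩ := hg.nonempty_support
  obtain ⟨b, hb, hxb⟩ := P.exists_mem (mem_univ x)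
  have hmap : ∀ c ∈ P.parts, c.map g.toEmbedding ∈ P.parts := fun c hc => by
    rw [← hgP, parts_smul]
    exact mem_map_of_mem _ hc
  suffices hsub : b ⊆ g.support by
    rwa [← eq_of_subset_of_card_le hsub (hP b hb).ge]
  intro y hyb
  by_contra hy
  have hinv : b.map g.toEmbedding = b :=
    P.eq_of_mem_parts (hmap b hb) hb (mem_map_of_mem _ hyb)
      (by rwa [Equiv.toEmbedding_apply, Equiv.Perm.notMem_support.1 hy])
  have hmaps : Set.MapsTo g b b := fun z hz => hinv ▸ mem_map_of_mem g.toEmbedding hz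
  have hsupp : g.support ⊆ b := fun z hz => by
    obtain ⟨k, rfl⟩ :=
      hg.exists_pow_eq (Equiv.Perm.mem_support.1 hx) (Equiv.Perm.mem_support.1 hz)
    rw [Equiv.Perm.coe_pow]
    exact hmaps.iterate k hxb
  have hlt := card_lt_card (ssubset_of_subset_of_ne hsupp (by rintro rfl; exact hy hyb))
  exact hlt.ne' (hP b hb)

end PermAction

end Finpartition

theorem Finset.exists_isCycle_support_eq {α : Type*} [Fintype α] [DecidableEq α] {s : Finset α}
    (hs : s.Nontrivial) : ∃ g : Equiv.Perm α, g.IsCycle ∧ g.support = s := by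
  obtain ⟨g, hg, hsupp⟩ := s.exists_cycleOn
  have hs' : (s : Set α).Nontrivial := by exact_mod_cast hs
  refine ⟨g, Equiv.Perm.isCycle_iff_exists_isCycleOn.2
    ⟨s, hs', hg, fun x hx => hsupp (Equiv.Perm.mem_support.2 hx)⟩, hsupp.antisymm ?_⟩
  exact fun x hx => Equiv.Perm.mem_support.2 (hg.apply_ne hs' hx)

theorem MulAction.mem_fixedPoints_zpowers_iff {G X : Type*} [Group G] [MulAction G X] {g : G}
    {x : X} : x ∈ fixedPoints (Subgroup.zpowers g) X ↔ g • x = x :=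
  ⟨fun h => h ⟨g, Subgroup.mem_zpowers g⟩,
    fun h k => Subgroup.zpowers_le.2 (mem_stabilizer_iff.2 h) k.2⟩

/-- `perfectPMatchings p n` is by definition
`Nat.card (PerfectPMatching p (univ : Finset (Fin n)))`. -/
abbrev PerfectPMatching {α : Type*} [DecidableEq α] (p : ℕ) (s : Finset α) : Type _ :=
  {P : Finpartition s // ∀ b ∈ P.parts, #b = p}

namespace PerfectPMatching

variable {α β : Type*} [DecidableEq α] [DecidableEq β] {p : ℕ}

theorem card_congr {s : Finset α} {t : Finset β} (f : α ↪ β) (hst : s.map f = t) :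
    Nat.card (PerfectPMatching p s) = Nat.card (PerfectPMatching p t) := by
  subst hst
  refine Nat.card_congr ((Finpartition.mapEmbeddingEquiv f).subtypeEquiv fun P => ?_)
  simp [Finpartition.mapEmbeddingEquiv, Finpartition.parts_mapEmbedding]

theorem card_eq (s : Finset α) : Nat.card (PerfectPMatching p s) = perfectPMatchings p #s :=
  (card_congr (s.equivFin.symm.toEmbedding.trans (.subtype _))
    (by rw [← map_map, map_univ_equiv, univ_eq_attach, attach_map_val])).symm

noncomputable def withPartEquiv {s t : Finset α} (hst : s ⊆ t) (hs : s.Nonempty) (hsp : #s = p) :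
    {P : PerfectPMatching p t // s ∈ P.1.parts} ≃ PerfectPMatching p (t \ s) where
  toFun P := ⟨P.1.1.avoid s, fun b hb =>
    P.1.2 b (mem_of_mem_erase (Finpartition.parts_avoid_of_mem P.2 ▸ hb))⟩
  invFun Q := by
    refine ⟨⟨Q.1.extend hs.ne_empty disjoint_sdiff_self_left (sdiff_sup_cancel hst),
      fun b hb => ?_⟩, mem_insert_self _ _⟩
    rcases mem_insert.1 hb with rfl | hb
    exacts [hsp, Q.2 b hb]
  left_inv P := by
    ext1; ext1; ext1
    simp [Finpartition.parts_avoid_of_mem P.2, insert_erase P.2]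
  right_inv Q := by
    have hQ : s ∉ Q.1.parts := fun h => by
      obtain ⟨x, hx⟩ := hs
      simpa [hx] using Q.1.le h hx
    ext1; ext1
    rw [Finpartition.parts_avoid_of_mem (by simp), Finpartition.extend_parts, erase_insert hQ]

variable [Fintype α]

instance : MulAction (Equiv.Perm α) (PerfectPMatching p (univ : Finset α)) where
  smul g P := ⟨g • P.1, fun b hb => by
    obtain ⟨c, hc, rfl⟩ := mem_map.1 (Finpartition.parts_smul g P.1 ▸ hb)
    simpa using P.2 c hc⟩
  one_smul P := Subtype.ext (one_smul _ P.1)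
  mul_smul g h P := Subtype.ext (mul_smul g h P.1)

theorem smul_eq_self_iff {g : Equiv.Perm α} (hg : g.IsCycle) (hgp : #g.support = p)
    {P : PerfectPMatching p (univ : Finset α)} : g • P = P ↔ g.support ∈ P.1.parts :=
  ⟨fun h => Finpartition.support_mem_of_smul_eq_self hg (hgp ▸ P.2) (congrArg Subtype.val h),
    fun h => Subtype.ext (Finpartition.smul_eq_self_of_support_mem h)⟩

end PerfectPMatching

/-- **Modular recurrence for perfect p-matchings.**
For a prime p and every n > p, f_{M_p}(n) ≡ f_{M_p}(n − p) (mod p). -/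
theorem perfectPMatchings_modular_recurrence (p : ℕ) (hp : p.Prime) :
    ∀ n : ℕ, p < n → perfectPMatchings p n ≡ perfectPMatchings p (n - p) [MOD p] := by
  intro n hn
  have : Fact p.Prime := ⟨hp⟩
  obtain ⟨s, -, hs⟩ :=
    exists_subset_card_eq (s := (univ : Finset (Fin n))) (by simpa using hn.le)
  obtain ⟨g, hg, rfl⟩ :=
    exists_isCycle_support_eq (one_lt_card_iff_nontrivial.1 (hs ▸ hp.one_lt))
  have hG : IsPGroup p (Subgroup.zpowers g) :=
    IsPGroup.of_card (n := 1) (by rw [Nat.card_zpowers, hg.orderOf, hs, pow_one])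
  calc perfectPMatchings p n
      ≡ Nat.card (MulAction.fixedPoints (Subgroup.zpowers g)
          (PerfectPMatching p (univ : Finset (Fin n)))) [MOD p] :=
        hG.card_modEq_card_fixedPoints _
    _ = Nat.card {P : PerfectPMatching p (univ : Finset (Fin n)) // g.support ∈ P.1.parts} :=
        Nat.card_congr (Equiv.subtypeEquivRight fun _ =>
          MulAction.mem_fixedPoints_zpowers_iff.trans (PerfectPMatching.smul_eq_self_iff hg hs))
    _ = perfectPMatchings p (n - p) := by
        rw [Nat.card_congr (PerfectPMatching.withPartEquiv (subset_univ _) hg.nonempty_support hs),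
          PerfectPMatching.card_eq, ← compl_eq_univ_sdiff, card_compl, Fintype.card_fin, hs]
end
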